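/- Consider the modified flow X'(t) = F(X(t)) with F(x) = -f'(x) + βη f'(x) f''(x), for f ∈ C⁴(ℝ) and β ∈ ℝ. Then X(t+η) = X(t) - η f'(X(t)) + η² (β + 1/2) f'(X(t)) f''(X(t)) + O(η³). In particular, the choice β = -1/2 makes the flow agree with the GD step x - ηf'(x) up to O(η³), while β = 0 and β = 1/2 agree up to O(η²). -/

import Mathlib

/-!
On a time interval of length `η`, the trajectory `X η` stays in a fixed compact neighbourhood of
`x` once `η` is small, so its third derivative `X''' = (F'' F + F'²) F`, where
`F = -f' + βη f' f''`, is bounded uniformly in `η` there. Taylor's formula then gives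
`X η (t₀ + η) = x + η F(x) + η²/2 F'(x) F(x) + O(η³)`, and expanding the right-hand side in `η`
leaves `x - η f'(x) + η² (β + 1/2) f'(x) f''(x) + O(η³)`.
-/

open Set Metric Filter Topology Asymptotics

section NormedSpace

variable {E : Type*} [NormedAddCommGroup E] [NormedSpace ℝ E]

theorem norm_sub_taylor_two_le {g g₁ g₂ g₃ : ℝ → E} {a b M : ℝ} (hab : a ≤ b)
    (h₁ : ∀ t ∈ Icc a b, HasDerivAt g (g₁ t) t)
    (h₂ : ∀ t ∈ Icc a b, HasDerivAt g₁ (g₂ t) t)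
    (h₃ : ∀ t ∈ Icc a b, HasDerivAt g₂ (g₃ t) t)
    (hM : ∀ t ∈ Icc a b, ‖g₃ t‖ ≤ M) :
    ‖g b - (g a + (b - a) • g₁ a + ((b - a) ^ 2 / 2) • g₂ a)‖ ≤ M / 2 * (b - a) ^ 3 := by
  -- the Taylor polynomial of `g` at `t`, evaluated at `b`; its `t`-derivative is the remainder
  set φ : ℝ → E := fun t => g t + (b - t) • g₁ t + ((b - t) ^ 2 / 2) • g₂ t
  have hφ : ∀ t ∈ Icc a b, HasDerivAt φ (((b - t) ^ 2 / 2) • g₃ t) t := by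
    intro t ht
    have hb : HasDerivAt (fun t : ℝ => b - t) (-1) t := by
      simpa using (hasDerivAt_id t).const_sub b
    have hb2 : HasDerivAt (fun t : ℝ => (b - t) ^ 2 / 2) (-(b - t)) t :=
      ((hb.fun_pow 2).div_const 2).congr_deriv (by norm_num; ring)
    exact ((h₁ t ht).add (hb.smul (h₂ t ht))).add (hb2.smul (h₃ t ht)) |>.congr_deriv (by module)
  have hφ_le : ∀ t ∈ Icc a b, ‖((b - t) ^ 2 / 2) • g₃ t‖ ≤ (b - a) ^ 2 / 2 * M := by
    intro t ht
    rw [norm_smul, Real.norm_of_nonneg (by positivity)]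
    have : b - t ≤ b - a := by linarith [ht.1]
    gcongr
    · linarith [ht.2]
    · exact hM t ht
  have key := (convex_Icc a b).norm_image_sub_le_of_norm_hasDerivWithin_le
    (fun t ht => (hφ t ht).hasDerivWithinAt) hφ_le (left_mem_Icc.2 hab) (right_mem_Icc.2 hab)
  have hφb : φ b = g b := by simp [φ]
  rw [hφb, Real.norm_of_nonneg (sub_nonneg.2 hab)] at key
  calc _ ≤ (b - a) ^ 2 / 2 * M * (b - a) := key
    _ = M / 2 * (b - a) ^ 3 := by ring

theorem mem_closedBall_of_norm_deriv_lt {X v : ℝ → E} {a b M r : ℝ} (hM : 0 ≤ M)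
    (hX : ∀ t ∈ Icc a b, HasDerivAt X (v t) t)
    (hv : ∀ t ∈ Ico a b, X t ∈ closedBall (X a) r → ‖v t‖ < M) (hMr : M * (b - a) ≤ r) :
    ∀ t ∈ Icc a b, X t ∈ closedBall (X a) r := by
  have hle : ∀ t ∈ Icc a b, M * (t - a) ≤ r := fun t ht =>
    (mul_le_mul_of_nonneg_left (by linarith [ht.2]) hM).trans hMr
  -- fence `‖X t - X a‖` by the line `M (t - a)`, which stays inside the ball
  have hfence : ∀ t ∈ Icc a b, ‖X t - X a‖ ≤ M * (t - a) := by
    refine image_norm_le_of_norm_deriv_right_lt_deriv_boundary' (f := fun t => X t - X a)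
      (f' := v) (B' := fun _ => M)
      (fun t ht => ((hX t ht).continuousAt.sub continuousAt_const).continuousWithinAt)
      (fun t ht => ((hX t (Ico_subset_Icc_self ht)).sub_const (X a)).hasDerivWithinAt)
      (by simp) (by fun_prop) (fun t _ => ?_) (fun t ht hXt => hv t ht ?_)
    · simpa using (((hasDerivAt_id t).sub_const a).const_mul M).hasDerivWithinAt
    · rw [mem_closedBall, dist_eq_norm, hXt]
      exact hle t (Ico_subset_Icc_self ht)
  intro t ht
  rw [mem_closedBall, dist_eq_norm]
  exact (hfence t ht).trans (hle t ht)

end NormedSpace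

theorem abs_flow_sub_taylor_two_le {F F' F'' X : ℝ → ℝ} {a b M : ℝ} (hab : a ≤ b)
    (hF : ∀ y, HasDerivAt F (F' y) y) (hF' : ∀ y, HasDerivAt F' (F'' y) y)
    (hX : ∀ t ∈ Icc a b, HasDerivAt X (F (X t)) t)
    (hM : ∀ t ∈ Icc a b, |(F'' (X t) * F (X t) + F' (X t) ^ 2) * F (X t)| ≤ M) :
    |X b - (X a + (b - a) * F (X a) + (b - a) ^ 2 / 2 * (F' (X a) * F (X a)))| ≤
      M / 2 * (b - a) ^ 3 := by
  have hFX : ∀ t ∈ Icc a b, HasDerivAt (fun t => F (X t)) (F' (X t) * F (X t)) t :=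
    fun t ht => (hF (X t)).comp t (hX t ht)
  have hF'X : ∀ t ∈ Icc a b, HasDerivAt (fun t => F' (X t) * F (X t))
      ((F'' (X t) * F (X t) + F' (X t) ^ 2) * F (X t)) t := fun t ht =>
    (((hF' (X t)).comp t (hX t ht)).mul (hFX t ht)).congr_deriv
      (by simp only [Function.comp]; ring)
  exact norm_sub_taylor_two_le hab hX hFX hF'X hM

theorem flow_sub_taylor_two_isBigO {F F' F'' : ℝ → ℝ → ℝ}
    (hF : ∀ η y, HasDerivAt (F η) (F' η y) y) (hF' : ∀ η y, HasDerivAt (F' η) (F'' η y) y)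
    (hcF : Continuous (Function.uncurry F)) (hcF' : Continuous (Function.uncurry F'))
    (hcF'' : Continuous (Function.uncurry F''))
    {X : ℝ → ℝ → ℝ} {t₀ x : ℝ} (hinit : ∀ η, X η t₀ = x)
    (hX : ∀ η t, HasDerivAt (X η) (F η (X η t)) t) :
    (fun η => X η (t₀ + η) - (x + η * F η x + η ^ 2 / 2 * (F' η x * F η x)))
      =O[𝓝[>] 0] (· ^ 3) := by
  -- for `η ≤ 1/(|M₁| + 1)` the trajectory cannot leave `closedBall x 1` before time `t₀ + η`
  set K : Set (ℝ × ℝ) := Icc 0 1 ×ˢ closedBall x 1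
  have hK : IsCompact K := isCompact_Icc.prod (isCompact_closedBall x 1)
  obtain ⟨M₁, hM₁⟩ := hK.exists_bound_of_continuousOn hcF.continuousOn
  have hcG :
      Continuous fun p : ℝ × ℝ => (F'' p.1 p.2 * F p.1 p.2 + F' p.1 p.2 ^ 2) * F p.1 p.2 := by
    simp only [Function.uncurry_def] at hcF hcF' hcF''; fun_prop
  obtain ⟨M, hM⟩ := hK.exists_bound_of_continuousOn hcG.continuousOn
  refine .of_bound (M / 2) ?_
  filter_upwards [Ioo_mem_nhdsGT (show (0 : ℝ) < 1 / (|M₁| + 1) by positivity)] with η ⟨hη, hηη₀⟩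
  have hηM₁ : (|M₁| + 1) * η < 1 := by rwa [lt_div_iff₀' (by positivity)] at hηη₀
  have hη1 : η ≤ 1 := by nlinarith [abs_nonneg M₁]
  have hXK : ∀ t ∈ Icc t₀ (t₀ + η), (η, X η t) ∈ K := by
    intro t ht
    refine ⟨⟨hη.le, hη1⟩, ?_⟩
    rw [← hinit η]
    refine mem_closedBall_of_norm_deriv_lt (M := |M₁| + 1) (by positivity) (fun t _ => hX η t)
      (fun s _ hs => ?_) (by rw [add_sub_cancel_left]; exact hηM₁.le) t ht
    rw [hinit η] at hs
    exact (hM₁ (η, X η s) ⟨⟨hη.le, hη1⟩, hs⟩).trans_lt ((le_abs_self M₁).trans_lt (lt_add_one _))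
  have key := abs_flow_sub_taylor_two_le (le_add_of_nonneg_right hη.le) (hF η) (hF' η)
    (fun t _ => hX η t) (fun t ht => hM _ (hXK t ht))
  rw [hinit η, add_sub_cancel_left] at key
  rwa [Real.norm_eq_abs, Real.norm_of_nonneg (by positivity)]

theorem ContDiff.hasDerivAt_and_hasDerivAt_deriv {φ : ℝ → ℝ} (hφ : ContDiff ℝ 2 φ) :
    (∀ y, HasDerivAt φ (deriv φ y) y) ∧ ∀ y, HasDerivAt (deriv φ) (deriv (deriv φ) y) y := by
  have hφ' : ContDiff ℝ 1 (deriv φ) := hφ.deriv'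
  exact ⟨fun y => (hφ.differentiable (by norm_num) y).hasDerivAt,
    fun y => (hφ'.differentiable (by norm_num) y).hasDerivAt⟩

theorem affine_flow_step_isBigO {A B : ℝ → ℝ} (hA : ContDiff ℝ 2 A) (hB : ContDiff ℝ 2 B)
    {X : ℝ → ℝ → ℝ} {t₀ x : ℝ} (hinit : ∀ η, X η t₀ = x)
    (hX : ∀ η t, HasDerivAt (X η) (A (X η t) + η * B (X η t)) t) :
    (fun η => X η (t₀ + η) - (x + η * A x + η ^ 2 * (B x + deriv A x * A x / 2)))
      =O[𝓝[>] 0] (· ^ 3) := by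
  have hcA' : Continuous (deriv A) := hA.continuous_deriv (by norm_num)
  have hcB' : Continuous (deriv B) := hB.continuous_deriv (by norm_num)
  have hcA'' : Continuous (deriv (deriv A)) := (hA.deriv' (n := 1)).continuous_deriv le_rfl
  have hcB'' : Continuous (deriv (deriv B)) := (hB.deriv' (n := 1)).continuous_deriv le_rfl
  obtain ⟨hA₁, hA₂⟩ := hA.hasDerivAt_and_hasDerivAt_deriv
  obtain ⟨hB₁, hB₂⟩ := hB.hasDerivAt_and_hasDerivAt_deriv
  have hTaylor := flow_sub_taylor_two_isBigO (F := fun η y => A y + η * B y)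
    (F' := fun η y => deriv A y + η * deriv B y)
    (F'' := fun η y => deriv (deriv A) y + η * deriv (deriv B) y)
    (fun η y => (hA₁ y).add ((hB₁ y).const_mul η)) (fun η y => (hA₂ y).add ((hB₂ y).const_mul η))
    (by simp only [Function.uncurry_def]; fun_prop) (by simp only [Function.uncurry_def]; fun_prop)
    (by simp only [Function.uncurry_def]; fun_prop) hinit hX
  -- the second-order Taylor step differs from the claimed expansion by `η³ (p + η q)`
  set p := (deriv A x * B x + deriv B x * A x) / 2
  set q := deriv B x * B x / 2
  have hrem : (fun η : ℝ => η ^ 3 * (p + η * q)) =O[𝓝[>] 0] (· ^ 3) := by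
    have hbdd : Tendsto (fun η : ℝ => p + η * q) (𝓝[>] 0) (𝓝 (p + 0 * q)) :=
      ((continuous_const.add (continuous_id.mul continuous_const)).tendsto 0).mono_left
        nhdsWithin_le_nhds
    simpa using (isBigO_refl (· ^ 3 : ℝ → ℝ) _).mul (hbdd.isBigO_one ℝ)
  exact (hTaylor.add hrem).congr_left fun η => by ring

theorem exists_abs_le_mul_pow_of_isBigO {u : ℝ → ℝ} {n : ℕ} (h : u =O[𝓝[>] 0] (· ^ n)) :
    ∃ C > 0, ∃ η₀ > 0, ∀ η : ℝ, 0 < η → η < η₀ → |u η| ≤ C * η ^ n := by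
  obtain ⟨C, hC, hCu⟩ := h.exists_pos
  obtain ⟨η₀, hη₀, hsub⟩ := mem_nhdsGT_iff_exists_Ioo_subset.1 hCu.bound
  refine ⟨C, hC, η₀, hη₀, fun η hη hηη₀ => ?_⟩
  simpa [abs_of_pos hη] using hsub ⟨hη, hηη₀⟩

/-- Modified flow X' = -f'(X) + βη f'(X) f''(X):
X(t₀+η) = x - ηf'(x) + η²(β+1/2) f'(x) f''(x) + O(η³); in particular β = -1/2
matches the GD step up to O(η³), while β = 0 and β = 1/2 match up to O(η²). -/
theorem stmt10 (f : ℝ → ℝ) (hf : ContDiff ℝ 4 f) (β : ℝ)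
    (X : ℝ → ℝ → ℝ) (t₀ x : ℝ)
    (hinit : ∀ η, X η t₀ = x)
    (hODE : ∀ η t, HasDerivAt (X η)
      (-(deriv f (X η t)) + β * η * deriv f (X η t) * deriv (deriv f) (X η t)) t) :
    (∃ C > 0, ∃ η₀ > 0, ∀ η : ℝ, 0 < η → η < η₀ →
      |X η (t₀ + η) - (x - η * deriv f x
        + η ^ 2 * (β + 1 / 2) * deriv f x * deriv (deriv f) x)| ≤ C * η ^ 3) ∧
    (β = -(1 / 2) → ∃ C > 0, ∃ η₀ > 0, ∀ η : ℝ, 0 < η → η < η₀ →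
      |X η (t₀ + η) - (x - η * deriv f x)| ≤ C * η ^ 3) ∧
    ((β = 0 ∨ β = 1 / 2) → ∃ C > 0, ∃ η₀ > 0, ∀ η : ℝ, 0 < η → η < η₀ →
      |X η (t₀ + η) - (x - η * deriv f x)| ≤ C * η ^ 2) := by
  have hf' : ContDiff ℝ 3 (deriv f) := hf.deriv'
  have hf'' : ContDiff ℝ 2 (deriv (deriv f)) := hf'.deriv'
  have hA : ContDiff ℝ 2 (fun y => -deriv f y) := (hf'.of_le (by norm_num)).neg
  have hB : ContDiff ℝ 2 (fun y => β * (deriv f y * deriv (deriv f) y)) :=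
    contDiff_const.mul ((hf'.of_le (by norm_num)).mul hf'')
  have hexp := affine_flow_step_isBigO hA hB hinit fun η t => (hODE η t).congr_deriv (by ring)
  have hcube : (fun η => X η (t₀ + η) - (x - η * deriv f x
      + η ^ 2 * (β + 1 / 2) * deriv f x * deriv (deriv f) x)) =O[𝓝[>] 0] (· ^ 3) :=
    hexp.congr_left fun η => by rw [deriv.fun_neg]; ring
  refine ⟨exists_abs_le_mul_pow_of_isBigO hcube,
    fun hβ => exists_abs_le_mul_pow_of_isBigO (hcube.congr_left fun η => by rw [hβ]; ring),
    fun _ => exists_abs_le_mul_pow_of_isBigO ?_⟩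
  have hpow : (fun η : ℝ => η ^ 3) =O[𝓝[>] 0] (· ^ 2) :=
    (isLittleO_pow_pow (by norm_num)).isBigO.mono nhdsWithin_le_nhds
  exact ((hcube.trans hpow).add ((isBigO_refl _ _).const_mul_left
    ((β + 1 / 2) * deriv f x * deriv (deriv f) x))).congr_left fun η => by ring
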